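/- arXiv:2007.03026 — 6 statements merged into one kernel-verified Lean document; each statement's English description precedes it below -/
import Mathlib

section
/- Let G be a finite group acting transitively on a finite set X (for instance X = G/H for a subgroup H). Then Σ_{g∈G} |Fix_X(g²)| ≥ |G|, with equality if and only if the kernel of the action has odd index in G; here Fix_X(y) = {x ∈ X : y·x = x}. -/
open MulAction Set

section aux
variable {G : Type*} [Group G] [Fintype G] {X : Type*} [Fintype X] [Nonempty X]
    [MulAction G X] [MulAction.IsPretransitive G X]

set_option linter.unusedSectionVars false

lemma mem_ker_iff' (g : G) : g ∈ (MulAction.toPermHom G X).ker ↔ ∀ x : X, g • x = x := by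
  simp [MonoidHom.mem_ker, Equiv.Perm.ext_iff, MulAction.toPermHom_apply]

lemma swap_sum' : ∑ g : G, {x : X | (g ^ 2) • x = x}.ncard
    = ∑ x : X, {g : G | (g ^ 2) • x = x}.ncard := by
  classical
  simp only [Set.ncard_eq_toFinset_card', Set.toFinset_setOf, Finset.card_filter]
  exact Finset.sum_comm

lemma stab_subset' (x : X) :
    (MulAction.stabilizer G x : Set G) ⊆ {g : G | (g ^ 2) • x = x} := by
  intro g hg
  exact pow_mem (Subgroup.mem_carrier.mp hg) 2

lemma odd_eq' (h : Odd (MulAction.toPermHom G X).ker.index) (x : X) :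
    {g : G | (g ^ 2) • x = x} = (MulAction.stabilizer G x : Set G) := by
  refine subset_antisymm ?_ (stab_subset' x)
  intro g (hg : (g ^ 2) • x = x)
  set K := (MulAction.toPermHom G X).ker
  have hdvd : orderOf (QuotientGroup.mk g : G ⧸ K) ∣ K.index := by
    simpa [Subgroup.index] using orderOf_dvd_natCard (QuotientGroup.mk g : G ⧸ K)
  have hodd : Odd (orderOf (QuotientGroup.mk g : G ⧸ K)) := h.of_dvd_nat hdvd
  obtain ⟨m, hm⟩ := hodd
  have hker : g ^ orderOf (QuotientGroup.mk g : G ⧸ K) ∈ K := by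
    rw [← QuotientGroup.eq_one_iff, QuotientGroup.mk_pow, pow_orderOf_eq_one]
  have h1 : g ^ orderOf (QuotientGroup.mk g : G ⧸ K) ∈ MulAction.stabilizer G x :=
    (mem_ker_iff' _).mp hker x
  have h2 : (g ^ 2) ^ m ∈ MulAction.stabilizer G x := pow_mem hg m
  have hgeq : g = g ^ orderOf (QuotientGroup.mk g : G ⧸ K) * ((g ^ 2) ^ m)⁻¹ := by
    rw [hm, ← pow_mul]; group
  rw [show (g ∈ (MulAction.stabilizer G x : Set G)) = (g ∈ MulAction.stabilizer G x) from rfl,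
    hgeq]
  exact mul_mem h1 (inv_mem h2)

lemma even_case' (h : ¬ Odd (MulAction.toPermHom G X).ker.index) :
    ∃ (g : G) (x : X), (g ^ 2) • x = x ∧ ¬ g • x = x := by
  set K := (MulAction.toPermHom G X).ker
  have hne : K.index ≠ 0 := Subgroup.index_ne_zero_of_finite
  have heven : 2 ∣ Nat.card (G ⧸ K) := by
    rcases Nat.even_or_odd K.index with he | ho
    · simpa [Subgroup.index] using he.two_dvd
    · exact absurd ho h
  haveI : Fact (Nat.Prime 2) := ⟨Nat.prime_two⟩
  obtain ⟨q, hq⟩ := exists_prime_orderOf_dvd_card' (G := G ⧸ K) 2 heven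
  obtain ⟨g, rfl⟩ := QuotientGroup.mk_surjective q
  have hg2 : g ^ 2 ∈ K := by
    rw [← QuotientGroup.eq_one_iff, QuotientGroup.mk_pow, ← hq, pow_orderOf_eq_one]
  have hgK : g ∉ K := by
    intro hgK
    rw [← QuotientGroup.eq_one_iff] at hgK
    rw [hgK, orderOf_one] at hq
    norm_num at hq
  obtain ⟨x, hx⟩ : ∃ x : X, ¬ g • x = x := by
    by_contra hall
    push_neg at hall
    exact hgK ((mem_ker_iff' g).mpr hall)
  exact ⟨g, x, (mem_ker_iff' _).mp hg2 x, hx⟩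

lemma stab_card_sum : ∑ x : X, Nat.card (MulAction.stabilizer G x) = Fintype.card G := by
  classical
  have h : ∀ x : X, Nat.card (MulAction.stabilizer G x) * Nat.card X = Nat.card G := by
    intro x
    rw [← MulAction.index_stabilizer_of_transitive G x, Subgroup.card_mul_index]
  have hpos : 0 < Nat.card X := Nat.card_pos
  have hx : ∀ x : X, Nat.card (MulAction.stabilizer G x) = Nat.card G / Nat.card X := by
    intro x; rw [← h x, Nat.mul_div_cancel _ hpos]
  rw [Finset.sum_congr rfl (fun x _ => hx x), Finset.sum_const, Finset.card_univ, smul_eq_mul,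
    ← Nat.card_eq_fintype_card (α := X), ← Nat.card_eq_fintype_card (α := G),
    Nat.mul_div_cancel' ⟨_, ((h (Classical.arbitrary X)).symm.trans (mul_comm _ _))⟩]

end aux

/-- For a finite group `G` acting transitively on a finite nonempty set `X`, one has
`∑_{g ∈ G} |Fix_X(g²)| ≥ |G|`, with equality iff the kernel of the action has
odd index in `G`. -/
theorem sum_card_fixedBy_sq_ge_card_iff_odd_kernel_index
    (G : Type*) [Group G] [Fintype G] (X : Type*) [Fintype X] [Nonempty X]
    [MulAction G X] [MulAction.IsPretransitive G X] :
    Fintype.card G ≤ ∑ g : G, {x : X | (g ^ 2) • x = x}.ncard ∧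
      ((∑ g : G, {x : X | (g ^ 2) • x = x}.ncard) = Fintype.card G ↔
        Odd (MulAction.toPermHom G X).ker.index) := by
  classical
  have key := swap_sum' (G := G) (X := X)
  have hcoe : ∀ x : X, Nat.card (MulAction.stabilizer G x)
      = (MulAction.stabilizer G x : Set G).ncard := fun x =>
    Nat.card_coe_set_eq _
  have hle : ∀ x : X, Nat.card (MulAction.stabilizer G x) ≤ {g : G | (g ^ 2) • x = x}.ncard := by
    intro x
    rw [hcoe x]
    exact Set.ncard_le_ncard (stab_subset' x) (Set.toFinite _)
  have hsum : Fintype.card G ≤ ∑ x : X, {g : G | (g ^ 2) • x = x}.ncard := by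
    rw [← stab_card_sum (G := G) (X := X)]
    exact Finset.sum_le_sum fun x _ => hle x
  refine ⟨key ▸ hsum, ?_, ?_⟩
  · intro heq
    by_contra hodd
    obtain ⟨g, x, hgx, hx⟩ := even_case' (G := G) (X := X) hodd
    have hlt : ∑ x : X, Nat.card (MulAction.stabilizer G x)
        < ∑ x : X, {g : G | (g ^ 2) • x = x}.ncard := by
      refine Finset.sum_lt_sum (fun i _ => hle i) ⟨x, Finset.mem_univ x, ?_⟩
      rw [hcoe x]
      refine Set.ncard_lt_ncard ⟨stab_subset' x, fun hsub => hx (hsub hgx)⟩ (Set.toFinite _)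
    rw [stab_card_sum (G := G) (X := X), ← key, heq] at hlt
    exact lt_irrefl _ hlt
  · intro hodd
    rw [key, Finset.sum_congr rfl fun x _ => by rw [odd_eq' hodd x, ← hcoe x]]
    exact stab_card_sum (G := G) (X := X)
end

section
/- Let G be a finite group and N a normal subgroup of G such that G/N has odd order. If χ is a real-valued irreducible complex character of G, then every irreducible constituent of the restriction χ_N of χ to N is real-valued. -/
/-!
Write `W` for a representation affording `θ` and `V` for one affording `χ`. Since `χ` is real,
`[χ_N, θ̄] = conj [χ_N, θ] ≠ 0`, so there are nonzero `N`-maps `F : W → V` and `H : V → W*`.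
The `G`-translates of `F W` span the irreducible `V`, so `H ∘ ρ(g) ∘ F ≠ 0` for some `g ∈ G`;
this is an `N`-map from `W` to the `g`-conjugate of `W*`, hence an isomorphism by Schur's lemma,
i.e. `θ(g n g⁻¹) = θ(n⁻¹)`. Then `g²` fixes `θ`, and so does `g ^ [G : N] ∈ N`; as `[G : N]`
is odd, `g` fixes `θ`, and `θ(n⁻¹) = θ(n)`.
-/

noncomputable section

/-- The inner product `[φ, ψ] = |G|⁻¹ ∑_{g ∈ G} φ(g) · conj (ψ(g))` of two class
functions of the finite group `G`. -/
def charInner (G : Type) [Group G] [Fintype G] (φ ψ : G → ℂ) : ℂ :=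
  (Fintype.card G : ℂ)⁻¹ * ∑ g : G, φ g * (starRingEnd ℂ) (ψ g)

/-- The permutation character `(1_H)^G` of `G` acting on the cosets `G ⧸ H`:
its value at `g` is the number of cosets fixed by `g`. -/
def permChar (G : Type) [Group G] [Fintype G] (H : Subgroup G) (g : G) : ℂ :=
  ({q : G ⧸ H | g • q = q}.ncard : ℂ)

/-- `χ` is an irreducible complex character of `G`, i.e. the character of some
simple (irreducible) finite-dimensional complex representation of `G`. -/
def IsIrredChar (G : Type) [Group G] [Fintype G] (χ : G → ℂ) : Prop :=
  ∃ V : FDRep ℂ G, CategoryTheory.Simple V ∧ V.character = χ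

/-- A function `χ : G → ℂ` is real-valued if all its values are fixed by conjugation. -/
def RealValued (G : Type) [Group G] (χ : G → ℂ) : Prop :=
  ∀ g : G, (starRingEnd ℂ) (χ g) = χ g

/-- The Frobenius–Schur indicator `ν₂(χ) = |G|⁻¹ ∑_{g ∈ G} χ(g²)`. -/
def FSIndicator (G : Type) [Group G] [Fintype G] (χ : G → ℂ) : ℂ :=
  (Fintype.card G : ℂ)⁻¹ * ∑ g : G, χ (g ^ 2)

open Module CategoryTheory

namespace Module.End

variable {K V : Type*} [Field K] [AddCommGroup V] [Module K V] [FiniteDimensional K V]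

theorem trace_pow_restrict_maxGenEigenspace (f : End K V) (μ : K) (k : ℕ) :
    LinearMap.trace K _ ((f.restrict (f.mapsTo_maxGenEigenspace_of_comm (Commute.refl f) μ)) ^ k) =
      μ ^ k * finrank K (f.maxGenEigenspace μ) := by
  set g := f.restrict (f.mapsTo_maxGenEigenspace_of_comm (Commute.refl f) μ)
  induction k with
  | zero => simp
  | succ k ih =>
    rw [pow_succ, mul_eq_comp, LinearMap.trace_comp_eq_mul_of_commute_of_isNilpotent μ
      (Commute.self_pow g k).symm (f.isNilpotent_restrict_maxGenEigenspace_sub_algebraMap μ), ih,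
      pow_succ]
    ring

theorem exists_trace_pow_eq_sum_maxGenEigenspace [IsAlgClosed K] (f : End K V) :
    ∃ s : Finset K, (∀ μ ∈ s, f.maxGenEigenspace μ ≠ ⊥) ∧
      ∀ k : ℕ, LinearMap.trace K V (f ^ k) = ∑ μ ∈ s, μ ^ k * finrank K (f.maxGenEigenspace μ) := by
  classical
  have hfin := WellFoundedGT.finite_ne_bot_of_iSupIndep f.independent_maxGenEigenspace
  refine ⟨hfin.toFinset, fun μ hμ => by simpa using hμ, fun k => ?_⟩
  have hint := DirectSum.isInternal_submodule_of_iSupIndep_of_iSup_eq_top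
    f.independent_maxGenEigenspace f.iSup_maxGenEigenspace_eq_top
  rw [LinearMap.trace_eq_sum_trace_restrict' hint hfin
    (fun μ => f.mapsTo_maxGenEigenspace_of_comm (Commute.self_pow f k) μ)]
  refine Finset.sum_congr rfl fun μ _ => ?_
  rw [← trace_pow_restrict_maxGenEigenspace]
  exact congrArg _ (pow_restrict k _).symm

theorem pow_eq_one_of_maxGenEigenspace_ne_bot [CharZero K] {f : End K V} {m : ℕ}
    (hf : f ^ m = 1) {μ : K} (hμ : f.maxGenEigenspace μ ≠ ⊥) : μ ^ m = 1 := by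
  have hd : (finrank K (f.maxGenEigenspace μ) : K) ≠ 0 := by
    exact_mod_cast Submodule.finrank_eq_zero.not.mpr hμ
  have hrestrict :
      (f.restrict (f.mapsTo_maxGenEigenspace_of_comm (Commute.refl f) μ)) ^ m = 1 := by
    ext x
    simp only [pow_restrict m fun x hx => f.mapsTo_maxGenEigenspace_of_comm (Commute.refl f) μ hx,
      LinearMap.coe_restrict_apply, hf, one_apply]
  have htrace := trace_pow_restrict_maxGenEigenspace f μ m
  rw [hrestrict, LinearMap.trace_one] at htrace
  exact (mul_eq_right₀ hd).mp htrace.symm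

theorem star_trace_eq_trace_pow_pred {V : Type*} [AddCommGroup V] [Module ℂ V]
    [FiniteDimensional ℂ V] {f : End ℂ V} {m : ℕ} (hm : m ≠ 0) (hf : f ^ m = 1) :
    starRingEnd ℂ (LinearMap.trace ℂ V f) = LinearMap.trace ℂ V (f ^ (m - 1)) := by
  obtain ⟨s, hs, htrace⟩ := exists_trace_pow_eq_sum_maxGenEigenspace f
  have htrace_one := htrace 1
  rw [pow_one] at htrace_one
  rw [htrace_one, htrace, map_sum]
  refine Finset.sum_congr rfl fun μ hμ => ?_
  have hroot := pow_eq_one_of_maxGenEigenspace_ne_bot hf (hs μ hμ)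
  have hinv : μ ^ (m - 1) = μ⁻¹ := eq_inv_of_mul_eq_one_left (by rw [pow_sub_one_mul hm, hroot])
  rw [map_mul, map_natCast, pow_one, hinv,
    Complex.inv_eq_conj (Complex.norm_eq_one_of_pow_eq_one hroot hm)]

end Module.End

namespace FDRep

variable {k G : Type} [Field k] [Monoid G]

def subtype (V : FDRep k G) (S : Subrepresentation V.ρ) : FDRep.of S.toRepresentation ⟶ V :=
  FDRep.forget₂HomLinearEquiv _ V (Rep.ofHom ⟨S.toSubmodule.subtype, fun _ => rfl⟩)

instance (V : FDRep k G) (S : Subrepresentation V.ρ) : Mono (V.subtype S) :=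
  ConcreteCategory.mono_of_injective _ S.toSubmodule.injective_subtype

instance isIrreducible_ρ (V : FDRep k G) [Simple V] : Representation.IsIrreducible V.ρ := by
  have : Nontrivial V := by
    by_contra h
    rw [not_nontrivial_iff_subsingleton] at h
    exact id_nonzero V (ConcreteCategory.hom_ext _ _ fun _ => Subsingleton.elim _ _)
  have : Nontrivial (Subrepresentation V.ρ) := by
    refine nontrivial_of_ne ⊥ ⊤ fun h => ?_
    obtain ⟨v, hv⟩ := exists_ne (0 : V)
    have hmem : v ∈ (⊤ : Subrepresentation V.ρ) := Submodule.mem_top (R := k)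
    rw [← h] at hmem
    exact hv hmem
  refine IsSimpleOrder.of_forall_eq_top fun S hS => Subrepresentation.toSubmodule_injective ?_
  obtain ⟨x, hx, hx0⟩ := Submodule.exists_mem_ne_zero_of_ne_bot
    fun h => hS (Subrepresentation.toSubmodule_injective h)
  have : IsIso (V.subtype S) := (Simple.mono_isIso_iff_nonzero _).mpr fun h =>
    hx0 congr(ConcreteCategory.hom $h ⟨x, hx⟩)
  refine Submodule.eq_top_iff'.mpr fun v => ?_
  obtain ⟨y, rfl⟩ := (ConcreteCategory.bijective_of_isIso (V.subtype S)).2 v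
  exact y.2

end FDRep

namespace Representation

section Monoid

variable {G V X Y k : Type*} [Monoid G] [Field k] [AddCommGroup V] [Module k V]
  [AddCommGroup X] [Module k X] [AddCommGroup Y] [Module k Y]

theorem IsIrreducible.exists_comp_ne_zero (ρ : Representation k G V) [IsIrreducible ρ]
    {F : X →ₗ[k] V} {H : V →ₗ[k] Y} (hF : F ≠ 0) (hH : H ≠ 0) :
    ∃ g, H ∘ₗ ρ g ∘ₗ F ≠ 0 := by
  by_contra! hzero
  -- the span `T` of the `G`-translates of `range F` is a nonzero subrepresentation inside `ker H`
  let T := ⨆ g, (LinearMap.range F).map (ρ g)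
  have hT : ∀ x, T.map (ρ x) ≤ T := fun x => by
    rw [Submodule.map_iSup]
    refine iSup_le fun g => ?_
    rw [← Submodule.map_comp, ← Module.End.mul_eq_comp, ← map_mul]
    exact le_iSup (fun g => (LinearMap.range F).map (ρ g)) (x * g)
  have hrange : LinearMap.range F ≤ T := by
    have h1 := le_iSup (fun g => (LinearMap.range F).map (ρ g)) 1
    rwa [map_one, Module.End.one_eq_id, Submodule.map_id] at h1
  rcases eq_bot_or_eq_top (⟨T, fun x _ hv => hT x (Submodule.mem_map_of_mem hv)⟩ :
      Subrepresentation ρ) with hbot | htop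
  · have hT_bot : T = ⊥ := congr(($hbot).toSubmodule)
    exact hF (LinearMap.range_eq_bot.mp (le_bot_iff.mp (hT_bot ▸ hrange)))
  · have hT_top : T = ⊤ := congr(($htop).toSubmodule)
    refine hH (LinearMap.ker_eq_top.mp (top_le_iff.mp (hT_top ▸ iSup_le fun g => ?_)))
    rw [← LinearMap.range_comp]
    exact LinearMap.range_le_ker_iff.mpr (hzero g)

theorem IsIrreducible.character_eq_of_ne_zero [FiniteDimensional k X] [FiniteDimensional k Y]
    {σ : Representation k G X} {τ : Representation k G Y} [IsIrreducible σ]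
    {u : IntertwiningMap σ τ} (hu : u ≠ 0) (hdim : finrank k X = finrank k Y) :
    σ.character = τ.character := by
  have hinj := (IsIrreducible.injective_or_eq_zero u).resolve_right hu
  exact char_iso (u.ofBijective ⟨hinj,
    (LinearMap.injective_iff_surjective_of_finrank_eq_finrank hdim (f := u.toLinearMap)).mp hinj⟩)

end Monoid

variable {G V X Y : Type*} [Group G]

theorem exists_intertwiningMap_comp_conjNormal_ne_zero {k : Type*} [Field k] [AddCommGroup V]
    [Module k V] [AddCommGroup X] [Module k X] [AddCommGroup Y] [Module k Y]
    {N : Subgroup G} [N.Normal] (ρ : Representation k G V) [IsIrreducible ρ]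
    {σ : Representation k N X} {τ : Representation k N Y}
    {F : IntertwiningMap σ (ρ.comp N.subtype)} {H : IntertwiningMap (ρ.comp N.subtype) τ}
    (hF : F ≠ 0) (hH : H ≠ 0) :
    ∃ g : G, ∃ u : IntertwiningMap σ (τ.comp (MulAut.conjNormal g).toMonoidHom), u ≠ 0 := by
  obtain ⟨g, hg⟩ := IsIrreducible.exists_comp_ne_zero ρ (F := F.toLinearMap)
    (H := H.toLinearMap) (fun h => hF (IntertwiningMap.ext h)) (fun h => hH (IntertwiningMap.ext h))
  refine ⟨g, (H.toLinearMap ∘ₗ ρ g ∘ₗ F.toLinearMap).intertwiningMap_of_isIntertwiningMap _ _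
    fun n x => ?_, fun hu => hg congr(($hu).toLinearMap)⟩
  have hconj : ρ g (ρ n (F x)) = ρ (MulAut.conjNormal g n) (ρ g (F x)) := by
    rw [← Module.End.mul_apply, ← Module.End.mul_apply, ← map_mul, ← map_mul,
      MulAut.conjNormal_apply, inv_mul_cancel_right]
  simp only [LinearMap.comp_apply, IntertwiningMap.toLinearMap_apply, F.isIntertwining]
  exact (congrArg H hconj).trans (H.isIntertwining _ _ (MulAut.conjNormal g n) _)

variable [AddCommGroup V] [Module ℂ V] [FiniteDimensional ℂ V]
  [AddCommGroup X] [Module ℂ X] [FiniteDimensional ℂ X]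

theorem character_inv_eq_star [Finite G] (ρ : Representation ℂ G V) (g : G) :
    ρ.character g⁻¹ = starRingEnd ℂ (ρ.character g) := by
  have hm : orderOf g ≠ 0 := (orderOf_pos g).ne'
  have hinv : g ^ (orderOf g - 1) = g⁻¹ :=
    eq_inv_of_mul_eq_one_left (by rw [pow_sub_one_mul hm, pow_orderOf_eq_one])
  have hpow : ρ g ^ orderOf g = 1 := by rw [← map_pow, pow_orderOf_eq_one, map_one]
  rw [character, character, Module.End.star_trace_eq_trace_pow_pred hm hpow, ← map_pow, hinv]

variable [Fintype G]

theorem exists_intertwiningMap_ne_zero (ρ : Representation ℂ G V) (σ : Representation ℂ G X)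
    (h : ∑ g, ρ.character g * starRingEnd ℂ (σ.character g) ≠ 0) :
    ∃ f : IntertwiningMap σ ρ, f ≠ 0 := by
  have : Invertible (Nat.card G : ℂ) :=
    invertibleOfNonzero (Nat.cast_ne_zero.mpr Nat.card_pos.ne')
  by_contra! hzero
  have : Subsingleton (IntertwiningMap σ ρ) := ⟨fun a b => (hzero a).trans (hzero b).symm⟩
  have hdim := card_inv_mul_sum_char_mul_char_eq_finrank σ ρ
  simp only [character_inv_eq_star, finrank_zero_of_subsingleton, Nat.cast_zero,
    mul_eq_zero, inv_eq_zero, Nat.cast_eq_zero] at hdim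
  exact h (hdim.resolve_left Nat.card_pos.ne')

theorem exists_intertwiningMap_dual_ne_zero (ρ : Representation ℂ G V)
    (σ : Representation ℂ G X) (hρ : ∀ g, starRingEnd ℂ (ρ.character g) = ρ.character g)
    (h : ∑ g, ρ.character g * starRingEnd ℂ (σ.character g) ≠ 0) :
    ∃ f : IntertwiningMap ρ σ.dual, f ≠ 0 := by
  refine exists_intertwiningMap_ne_zero σ.dual ρ fun hzero => h ?_
  simpa [char_dual, character_inv_eq_star, hρ, mul_comm] using hzero

end Representation

theorem Subgroup.mem_of_sq_mem_of_odd_pow_mem {G : Type*} [Group G] (H : Subgroup G) {g : G}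
    {k : ℕ} (hk : Odd k) (hsq : g ^ 2 ∈ H) (hpow : g ^ k ∈ H) : g ∈ H := by
  obtain ⟨j, rfl⟩ := hk
  have hg : g = ((g ^ 2) ^ j)⁻¹ * g ^ (2 * j + 1) := by group
  rw [hg]
  exact H.mul_mem (H.inv_mem (H.pow_mem hsq j)) hpow

section Inertia

variable {G α : Type*} [Group G] {N : Subgroup G} [N.Normal]

def inertiaSubgroup (f : N → α) : Subgroup G where
  carrier := {g | ∀ n, f (MulAut.conjNormal g n) = f n}
  one_mem' := by simp
  mul_mem' {a b} ha hb n := by rw [map_mul, MulAut.mul_apply, ha, hb]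
  inv_mem' {a} ha n := by
    rw [← ha, ← MulAut.mul_apply, ← map_mul, mul_inv_cancel, map_one, MulAut.one_apply]

theorem le_inertiaSubgroup {f : N → α} (hf : ∀ n x : N, f (n * x * n⁻¹) = f x) :
    N ≤ inertiaSubgroup f := fun n hn x => by
  rw [show MulAut.conjNormal n = MulAut.conj (⟨n, hn⟩ : N) from
    MulAut.conjNormal_val (h := ⟨n, hn⟩)]
  exact hf _ x

theorem apply_inv_eq_of_odd_index (hodd : Odd N.index) {f : N → α}
    (hf : ∀ n x : N, f (n * x * n⁻¹) = f x) {g : G}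
    (hg : ∀ n, f (MulAut.conjNormal g n) = f n⁻¹) (n : N) : f n⁻¹ = f n := by
  have hsq : g ^ 2 ∈ inertiaSubgroup f := fun x => by
    rw [map_pow, pow_two, MulAut.mul_apply, hg, ← map_inv, hg, inv_inv]
  have hg_mem := (inertiaSubgroup f).mem_of_sq_mem_of_odd_pow_mem hodd hsq
    (le_inertiaSubgroup hf (N.pow_index_mem g))
  rw [← hg n, hg_mem n]

end Inertia

/-- If `G/N` has odd order and `χ` is a real-valued irreducible character of `G`,
then every irreducible constituent of the restriction of `χ` to `N` is real-valued. -/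
theorem constituents_of_restriction_real_of_odd_index
    (G : Type) [Group G] [Fintype G] (N : Subgroup G) [N.Normal]
    (hodd : Odd N.index) (χ : G → ℂ) (hχ : IsIrredChar G χ) (hreal : RealValued G χ)
    (θ : ↥N → ℂ) [Fintype ↥N] (hθ : IsIrredChar ↥N θ)
    (hconst : charInner ↥N (fun n : ↥N => χ ↑n) θ ≠ 0) :
    RealValued ↥N θ := by
  obtain ⟨V, hV, rfl⟩ := hχ
  obtain ⟨W, hW, rfl⟩ := hθ
  let Res : Representation ℂ N V := V.ρ.comp N.subtype
  have hinner : ∑ n, Res.character n * starRingEnd ℂ (Representation.character W.ρ n) ≠ 0 :=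
    right_ne_zero_of_mul hconst
  obtain ⟨F, hF⟩ := Representation.exists_intertwiningMap_ne_zero Res W.ρ hinner
  obtain ⟨H, hH⟩ := Representation.exists_intertwiningMap_dual_ne_zero Res W.ρ (hreal ·) hinner
  obtain ⟨g, u, hu⟩ := Representation.exists_intertwiningMap_comp_conjNormal_ne_zero V.ρ hF hH
  have hchar := Representation.IsIrreducible.character_eq_of_ne_zero hu
    Subspace.dual_finrank_eq.symm
  have hg : ∀ n, W.character (MulAut.conjNormal g n) = W.character n⁻¹ := fun n => by
    have h : W.character n⁻¹ =
        Representation.character (Representation.dual W.ρ) (MulAut.conjNormal g n⁻¹) :=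
      congrFun hchar n⁻¹
    rw [Representation.char_dual, map_inv, inv_inv] at h
    exact h.symm
  intro n
  exact (Representation.character_inv_eq_star W.ρ n).symm.trans
    (apply_inv_eq_of_odd_index hodd (fun n x => FDRep.char_conj W x n) hg n)
end
end

section
/- Let G be a finite group, N a normal subgroup of G, and x ∈ N. Suppose that the index [G : N·C_G(x)] is odd and that x is real in G (conjugate in G to x⁻¹). Then x is real in N, i.e. x is conjugate in N to x⁻¹. -/
/-!
Let `g` invert `x` and put `H = N ⊔ C_G(x)`. Conjugation by `g` preserves `C_G(x) = C_G(x⁻¹)`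
and the normal subgroup `N`, so `g` normalizes `H`; moreover `g²` centralizes `x`, so `g² ∈ H`.
In the group `N_G(H)/H`, whose order divides the odd index `[G : H]`, the image of `g` thus has
order dividing `2`, hence is trivial. So `g = n c` with `n ∈ N` and `c ∈ C_G(x)`, and `n`
inverts `x`.
-/

namespace Subgroup

variable {G : Type*} [Group G]

theorem mem_of_mem_normalizer_of_pow_mem_of_coprime_index {H : Subgroup G} {g : G} {k : ℕ}
    (hg : g ∈ normalizer (H : Set G)) (hk : g ^ k ∈ H) (hcop : k.Coprime H.index) :
    g ∈ H := by
  set M := normalizer (H : Set G)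
  let g' : M := ⟨g, hg⟩
  suffices (g' : M ⧸ H.subgroupOf M) = 1 from (QuotientGroup.eq_one_iff g').mp this
  have hpow_k : (g' : M ⧸ H.subgroupOf M) ^ k = 1 := by
    rw [← QuotientGroup.mk_pow, QuotientGroup.eq_one_iff]
    exact hk
  have hpow_relIndex : (g' : M ⧸ H.subgroupOf M) ^ H.relIndex M = 1 := by
    rw [← QuotientGroup.mk_pow, QuotientGroup.eq_one_iff]
    exact pow_index_mem (H.subgroupOf M) g'
  have hgcd : k.gcd (H.relIndex M) = 1 :=
    hcop.coprime_dvd_right (H.relIndex_dvd_index_of_le le_normalizer)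
  simpa [hgcd] using pow_gcd_eq_one.mpr ⟨hpow_k, hpow_relIndex⟩

end Subgroup

section Inverting

open Subgroup

variable {G : Type*} [Group G] {g x : G}

theorem mem_normalizer_centralizer_of_conj_eq_inv (hg : g * x * g⁻¹ = x⁻¹) :
    g ∈ normalizer (centralizer {x} : Set G) := by
  rw [mem_normalizer_iff]
  intro h
  simp only [mem_centralizer_singleton_iff]
  change Commute h x ↔ Commute (g * h * g⁻¹) x
  rw [← Commute.conj_iff g, hg, Commute.inv_right_iff]

theorem sq_mem_centralizer_of_conj_eq_inv (hg : g * x * g⁻¹ = x⁻¹) :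
    g ^ 2 ∈ centralizer {x} := by
  have hconj : g ^ 2 * x * (g ^ 2)⁻¹ = x :=
    calc g ^ 2 * x * (g ^ 2)⁻¹ = g * (g * x * g⁻¹) * g⁻¹ := by rw [sq]; group
      _ = g * x⁻¹ * g⁻¹ := by rw [hg]
      _ = (g * x * g⁻¹)⁻¹ := by group
      _ = x := by rw [hg, inv_inv]
  exact mem_centralizer_singleton_iff.mpr (mul_inv_eq_iff_eq_mul.mp hconj)

theorem exists_conj_eq_of_mem_sup_centralizer {N : Subgroup G} [N.Normal]
    (hg : g ∈ N ⊔ centralizer {x}) : ∃ n ∈ N, n * x * n⁻¹ = g * x * g⁻¹ := by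
  obtain ⟨n, hn, c, hc, rfl⟩ := mem_sup_of_normal_left.mp hg
  refine ⟨n, hn, ?_⟩
  have hcx : c * x * c⁻¹ = x :=
    mul_inv_eq_iff_eq_mul.mpr (mem_centralizer_singleton_iff.mp hc)
  calc n * x * n⁻¹ = n * (c * x * c⁻¹) * n⁻¹ := by rw [hcx]
    _ = n * c * x * (n * c)⁻¹ := by group

end Inverting

theorem real_in_normal_subgroup_of_odd_index_general
    (G : Type*) [Group G] (N : Subgroup G) [N.Normal] (x : G)
    (hodd : Odd ((N ⊔ Subgroup.centralizer {x}).index))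
    (hreal : ∃ g : G, g * x * g⁻¹ = x⁻¹) :
    ∃ n ∈ N, n * x * n⁻¹ = x⁻¹ := by
  obtain ⟨g, hg⟩ := hreal
  have hnorm : g ∈ Subgroup.normalizer ((N ⊔ Subgroup.centralizer {x} : Subgroup G) : Set G) :=
    Subgroup.normalizer_le_normalizer_sup_of_normalizer_le_right
      (le_top.trans Subgroup.le_normalizer_of_normal) (mem_normalizer_centralizer_of_conj_eq_inv hg)
  have hmem : g ∈ N ⊔ Subgroup.centralizer {x} :=
    Subgroup.mem_of_mem_normalizer_of_pow_mem_of_coprime_index hnorm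
      (Subgroup.mem_sup_right (sq_mem_centralizer_of_conj_eq_inv hg))
      (Nat.coprime_two_left.mpr hodd)
  rw [← hg]
  exact exists_conj_eq_of_mem_sup_centralizer hmem

/-- If `N ⊴ G`, `x ∈ N`, the index `[G : N·C_G(x)]` is odd, and `x` is real in `G`,
then `x` is real in `N`. -/
theorem real_in_normal_subgroup_of_odd_index
    (G : Type*) [Group G] [Fintype G] (N : Subgroup G) [N.Normal] (x : G)
    (hx : x ∈ N) (hodd : Odd ((N ⊔ Subgroup.centralizer {x}).index))
    (hreal : ∃ g : G, g * x * g⁻¹ = x⁻¹) :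
    ∃ n ∈ N, n * x * n⁻¹ = x⁻¹ :=
  real_in_normal_subgroup_of_odd_index_general G N x hodd hreal
end

section
/- Let F be a finite field with q elements, let n ≥ 1, and let g ∈ SL_n(F) be a unipotent element, i.e. (g - 1)^n = 0. If q is even, or if n is odd, then g is real in SL_n(F), i.e. g is conjugate to g⁻¹ by an element of SL_n(F). -/
/-!
Through a unipotent `g`, `Fⁿ` becomes an `F[X]`-module killed by a power of the prime `X - 1`,
hence a direct sum of cyclic modules `F[X] ⧸ ((X - 1) ^ e)`. On each of them `X` is a unit and
`X ↦ X⁻¹` extends to an involutive algebra automorphism `τ` (as `(X⁻¹ - 1) ^ e = 0`), so that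
`X * τ (X * r) = τ r`. Summing these gives an involution `s` with `g * s * g = s`, so `g` is
conjugate to `g⁻¹` by `s`, and `det s = ±1`. When `det s = -1`, either `-1 = 1` (`q` even) or
`-s` has determinant `1` (`n` odd).
-/

open Polynomial

/-- In a group, `s * s = 1` and `a * s * a = s` say that `s * a * s⁻¹ = a⁻¹` for an involution
`s`; this form also makes sense in monoids such as `Module.End K V` and `Matrix n n K`. -/
def IsStronglyReal {M : Type*} [Monoid M] (a : M) : Prop :=
  ∃ s : M, s * s = 1 ∧ a * s * a = s

namespace IsStronglyReal

theorem map {M N F : Type*} [Monoid M] [Monoid N] [FunLike F M N] [MonoidHomClass F M N]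
    (f : F) {a : M} (ha : IsStronglyReal a) : IsStronglyReal (f a) := by
  obtain ⟨s, hs, has⟩ := ha
  exact ⟨f s, by rw [← map_mul, hs, map_one], by rw [← map_mul, ← map_mul, has]⟩

theorem isConj_inv {G : Type*} [Group G] {g : G} (hg : IsStronglyReal g) : IsConj g g⁻¹ := by
  obtain ⟨s, hs, hgs⟩ := hg
  have hs' : s⁻¹ = s := inv_eq_of_mul_eq_one_right hs
  refine isConj_iff.2 ⟨s, ?_⟩
  rw [hs', eq_inv_iff_mul_eq_one]
  calc s * g * s * g = s * (g * s * g) := by simp only [mul_assoc]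
    _ = 1 := by rw [hgs, hs]

end IsStronglyReal

theorem isStronglyReal_mulLeft {R A : Type*} [CommSemiring R] [CommSemiring A] [Algebra R A]
    (τ : A →ₐ[R] A) (hτ : Function.Involutive τ) {x : A} (hx : x * τ x = 1) :
    IsStronglyReal (LinearMap.mulLeft R x) := by
  refine ⟨τ.toLinearMap, LinearMap.ext hτ, LinearMap.ext fun a => ?_⟩
  change x * τ (x * a) = τ a
  rw [map_mul, ← mul_assoc, hx, one_mul]

theorem sub_one_pow_eq_zero_of_mul_eq_one {A : Type*} [CommRing A] {u v : A} (huv : u * v = 1)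
    {e : ℕ} (hu : (u - 1) ^ e = 0) : (v - 1) ^ e = 0 := by
  have : v - 1 = -v * (u - 1) := by linear_combination huv
  rw [this, mul_pow, hu, mul_zero]

section QuotientXSubOnePow

variable {R : Type*} [CommRing R] (e : ℕ)

local notation "Q[" R "," e "]" => R[X] ⧸ Ideal.span {((X : R[X]) - 1) ^ e}

theorem exists_involution_inverting_mk_X :
    ∃ τ : Q[R, e] →ₐ[R] Q[R, e],
      Function.Involutive τ ∧
      Ideal.Quotient.mk _ X * τ (Ideal.Quotient.mk _ X) = 1 := by
  set x : Q[R, e] := Ideal.Quotient.mk _ X with hxdef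
  have hx : (x - 1) ^ e = 0 := by
    rw [← map_one (Ideal.Quotient.mk _), ← map_sub, ← map_pow, Ideal.Quotient.eq_zero_iff_mem]
    exact Ideal.mem_span_singleton_self _
  obtain ⟨u, hu⟩ : IsUnit x := by
    simpa using (IsNilpotent.isUnit_add_one ⟨e, hx⟩ : IsUnit (x - 1 + 1))
  set y : Q[R, e] := ↑u⁻¹
  have hxy : x * y = 1 := by rw [← hu, Units.mul_inv]
  have hker : ∀ f ∈ Ideal.span {(X - 1 : R[X]) ^ e}, aeval y f = 0 := by
    intro f hf
    obtain ⟨g, rfl⟩ := Ideal.mem_span_singleton'.1 hf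
    rw [map_mul, map_pow, map_sub, aeval_X, map_one, sub_one_pow_eq_zero_of_mul_eq_one hxy hx,
      mul_zero]
  set τ := Ideal.Quotient.liftₐ _ (aeval (R := R) y) hker
  have hτx : τ x = y := by
    rw [hxdef]
    exact aeval_X y
  have hτy : τ y = x := by
    have : y * τ y = 1 := by
      calc y * τ y = τ (x * y) := by rw [map_mul, hτx]
        _ = 1 := by rw [hxy, map_one]
    calc τ y = x * (y * τ y) := by rw [← mul_assoc, hxy, one_mul]
      _ = x := by rw [this, mul_one]
  have hττ : τ.comp τ = AlgHom.id R _ :=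
    Ideal.Quotient.algHom_ext _ (Polynomial.algHom_ext (by simp [hτx, hτy, x]))
  exact ⟨τ, fun a => AlgHom.congr_fun hττ a, by rw [hτx, hxy]⟩

theorem isStronglyReal_lsmul_X_quotient :
    IsStronglyReal (Algebra.lsmul R R (A := R[X]) Q[R, e] (X : R[X])) := by
  obtain ⟨τ, hτ, hx⟩ := exists_involution_inverting_mk_X (R := R) e
  have : Algebra.lsmul R R (A := R[X]) Q[R, e] X =
      LinearMap.mulLeft R (Ideal.Quotient.mk _ X) :=
    LinearMap.ext fun a => Algebra.smul_def (X : R[X]) a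
  rw [this]
  exact isStronglyReal_mulLeft τ hτ hx

end QuotientXSubOnePow

section Lsmul

variable {R A : Type*} [CommSemiring R] [Semiring A] [Algebra R A] {a : A}

theorem isStronglyReal_lsmul_of_linearEquiv {M N : Type*} [AddCommMonoid M] [Module R M]
    [Module A M] [IsScalarTower R A M] [AddCommMonoid N] [Module R N] [Module A N]
    [IsScalarTower R A N] (e : M ≃ₗ[A] N) (h : IsStronglyReal (Algebra.lsmul R R N a)) :
    IsStronglyReal (Algebra.lsmul R R M a) := by
  have : (e.restrictScalars R).symm.conjRingEquiv (Algebra.lsmul R R N a) =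
      Algebra.lsmul R R M a := by
    ext m
    simp
  rw [← this]
  exact h.map _

theorem isStronglyReal_lsmul_pi {ι : Type*} {M : ι → Type*} [∀ i, AddCommMonoid (M i)]
    [∀ i, Module R (M i)] [∀ i, Module A (M i)] [∀ i, IsScalarTower R A (M i)]
    (h : ∀ i, IsStronglyReal (Algebra.lsmul R R (M i) a)) :
    IsStronglyReal (Algebra.lsmul R R (∀ i, M i) a) := by
  choose s hs has using h
  refine ⟨LinearMap.piMap s, LinearMap.ext fun m => funext fun i => ?_,
    LinearMap.ext fun m => funext fun i => ?_⟩
  · exact LinearMap.congr_fun (hs i) (m i)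
  · exact LinearMap.congr_fun (has i) (m i)

end Lsmul

theorem Module.End.isStronglyReal_of_isNilpotent_sub_one {K V : Type*} [Field K]
    [AddCommGroup V] [Module K V] [FiniteDimensional K V] {a : Module.End K V}
    (ha : IsNilpotent (a - 1)) : IsStronglyReal a := by
  classical
  obtain ⟨N, hN⟩ := ha
  have htors : Module.IsTorsion' (Module.AEval' a) (Submonoid.powers (X - 1 : K[X])) := by
    refine (Submodule.isTorsion'_powers_iff _).2 fun m => ⟨N, ?_⟩
    obtain ⟨v, rfl⟩ := (Module.AEval'.of a).surjective m
    rw [← Module.AEval.of_aeval_smul]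
    simp [hN]
  obtain ⟨d, k, ⟨φ⟩⟩ := Module.torsion_by_prime_power_decomposition
    (by simpa using irreducible_X_sub_C (1 : K)) htors
  have hX : IsStronglyReal (Algebra.lsmul K K (Module.AEval' a) (X : K[X])) :=
    isStronglyReal_lsmul_of_linearEquiv (φ.trans (DirectSum.linearEquivFunOnFintype _ _ _))
      (isStronglyReal_lsmul_pi fun i => isStronglyReal_lsmul_X_quotient (k i))
  have : (Module.AEval'.of a).symm.conjRingEquiv (Algebra.lsmul K K _ (X : K[X])) = a := by
    ext v
    simp [Module.AEval'.X_smul_of]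
  rw [← this]
  exact hX.map _

theorem Matrix.isStronglyReal_of_isNilpotent_sub_one {ι K : Type*} [Fintype ι] [DecidableEq ι]
    [Field K] {A : Matrix ι ι K} (hA : IsNilpotent (A - 1)) : IsStronglyReal A := by
  have h : IsNilpotent (Matrix.toLinAlgEquiv' A - 1) := by
    simpa using hA.map (Matrix.toLinAlgEquiv' (R := K) (n := ι))
  simpa using (Module.End.isStronglyReal_of_isNilpotent_sub_one h).map Matrix.toLinAlgEquiv'.symm

theorem Matrix.SpecialLinearGroup.isStronglyReal_of_isStronglyReal_coe {n K : Type*} [Fintype n]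
    [DecidableEq n] [CommRing K] [NoZeroDivisors K] {g : SpecialLinearGroup n K}
    (hg : IsStronglyReal (g : Matrix n n K)) (h : (-1 : K) = 1 ∨ Odd (Fintype.card n)) :
    IsStronglyReal g := by
  obtain ⟨C, hC, hgC⟩ := hg
  have hdet : C.det = 1 ∨ C.det = -1 :=
    mul_self_eq_one_iff.1 (by rw [← det_mul, hC, det_one])
  obtain ⟨D, hD, hDD, hgD⟩ :
      ∃ D : Matrix n n K, D.det = 1 ∧ D * D = 1 ∧ (g : Matrix n n K) * D * g = D := by
    rcases hdet with hdet | hdet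
    · exact ⟨C, hdet, hC, hgC⟩
    rcases h with hneg | hodd
    · exact ⟨C, hdet.trans hneg, hC, hgC⟩
    · refine ⟨-C, ?_, by rw [neg_mul_neg, hC], by rw [mul_neg, neg_mul, hgC]⟩
      rw [det_neg, hdet, hodd.neg_one_pow, neg_one_mul, neg_neg]
  exact ⟨⟨D, hD⟩, Subtype.ext hDD, Subtype.ext hgD⟩

theorem unipotent_real_in_SL_general
    (F : Type*) [Field F] [Fintype F] (n : ℕ)
    (g : Matrix.SpecialLinearGroup (Fin n) F)
    (hunip : ((g : Matrix (Fin n) (Fin n) F) - 1) ^ n = 0)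
    (h : Even (Fintype.card F) ∨ Odd n) :
    IsConj g g⁻¹ := by
  have hneg : (-1 : F) = 1 ∨ Odd (Fintype.card (Fin n)) := by
    rw [Fintype.card_fin]
    exact h.imp_left fun heven =>
      neg_one_eq_one_iff.2 (FiniteField.even_card_iff_char_two.2 (Nat.even_iff.1 heven))
  exact (Matrix.SpecialLinearGroup.isStronglyReal_of_isStronglyReal_coe
    (Matrix.isStronglyReal_of_isNilpotent_sub_one ⟨n, hunip⟩) hneg).isConj_inv

/-- A unipotent element of `SL_n(F)`, for `F` a finite field with `q` elements, is real
in `SL_n(F)` provided `q` is even or `n` is odd. -/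
theorem unipotent_real_in_SL
    (F : Type*) [Field F] [Fintype F] (n : ℕ) (hn : 1 ≤ n)
    (g : Matrix.SpecialLinearGroup (Fin n) F)
    (hunip : ((g : Matrix (Fin n) (Fin n) F) - 1) ^ n = 0)
    (h : Even (Fintype.card F) ∨ Odd n) :
    IsConj g g⁻¹ :=
  unipotent_real_in_SL_general F n g hunip h
end

section
/- Let G be a finite group of even order acting faithfully and primitively on a finite set X of odd cardinality. Assume that every real element of G that lies in some minimal normal subgroup of G fixes a point of X. Then G has a unique minimal normal subgroup, and this minimal normal subgroup is non-abelian. -/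
/-- Let a finite group `G` of even order act faithfully and primitively on a finite set
`X` of odd cardinality, and suppose every real element of `G` lying in some minimal
normal subgroup fixes a point of `X`. Then `G` has a unique minimal normal subgroup,
and it is non-abelian. -/
theorem unique_nonabelian_minimal_normal_of_primitive_odd_degree
    (G : Type*) [Group G] [Fintype G] (X : Type*) [Fintype X] [MulAction G X]
    [MulAction.IsPretransitive G X]
    (heven : Even (Fintype.card G)) (hoddX : Odd (Fintype.card X))
    (hfaithful : ∀ g : G, (∀ x : X, g • x = x) → g = 1)
    (hprim : ∀ x : X, IsCoatom (MulAction.stabilizer G x))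
    (hfix : ∀ N : Subgroup G, N.Normal → N ≠ ⊥ →
      (∀ M : Subgroup G, M.Normal → M ≤ N → M = ⊥ ∨ M = N) →
      ∀ x ∈ N, IsConj x x⁻¹ → ∃ a : X, x • a = a) :
    ∃ N : Subgroup G,
      (N.Normal ∧ N ≠ ⊥ ∧ (∀ M : Subgroup G, M.Normal → M ≤ N → M = ⊥ ∨ M = N) ∧
        ∃ a ∈ N, ∃ b ∈ N, a * b ≠ b * a) ∧
      ∀ N' : Subgroup G, (N'.Normal ∧ N' ≠ ⊥ ∧
        (∀ M : Subgroup G, M.Normal → M ≤ N' → M = ⊥ ∨ M = N')) → N' = N := by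
  classical
  -- An involution `t` exists, by Cauchy's theorem.
  obtain ⟨t, ht⟩ := exists_prime_orderOf_dvd_card (G := G) 2 heven.two_dvd
  have ht1 : t ≠ 1 := by
    intro h; rw [h, orderOf_one] at ht; norm_num at ht
  have ht2 : t * t = 1 := by
    have h := pow_orderOf_eq_one t; rwa [ht, pow_two] at h
  have htinv : t⁻¹ = t := by
    rw [inv_eq_iff_mul_eq_one]; exact ht2
  -- `t` fixes a point, since `|X|` is odd.
  have hP : IsPGroup 2 (Subgroup.zpowers t) :=
    IsPGroup.of_card (by rw [Nat.card_zpowers, ht, pow_one])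
  have hXodd : ¬ (2 ∣ Nat.card X) := by
    rw [Nat.card_eq_fintype_card]
    obtain ⟨k, hk⟩ := hoddX
    rintro ⟨m, hm⟩; omega
  obtain ⟨a₀, ha₀'⟩ := hP.nonempty_fixed_point_of_prime_not_dvd_card X hXodd
  have hta₀ : t • a₀ = a₀ := ha₀' ⟨t, Subgroup.mem_zpowers t⟩
  -- Any nontrivial normal subgroup is transitive, by primitivity and faithfulness.
  have htrans : ∀ (N : Subgroup G), N.Normal → N ≠ ⊥ → ∀ a b : X, ∃ n ∈ N, n • a = b := by
    intro N hN hNbot a b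
    have hnle : ¬ N ≤ MulAction.stabilizer G a := by
      intro hle
      apply hNbot
      rw [eq_bot_iff]
      intro n hn
      rw [Subgroup.mem_bot]
      apply hfaithful
      intro x
      obtain ⟨g, hg⟩ := MulAction.exists_smul_eq G a x
      have hmem : g⁻¹ * n * g ∈ N := hN.conj_mem' n hn g
      have hst : (g⁻¹ * n * g) • a = a := hle hmem
      have key : n * g = g * (g⁻¹ * n * g) := by group
      calc n • x = n • g • a := by rw [hg]
        _ = (n * g) • a := (mul_smul n g a).symm
        _ = (g * (g⁻¹ * n * g)) • a := by rw [key]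
        _ = g • (g⁻¹ * n * g) • a := mul_smul _ _ _
        _ = g • a := by rw [hst]
        _ = x := hg
    have hsup : N ⊔ MulAction.stabilizer G a = ⊤ := by
      refine (hprim a).2 _ (lt_of_le_of_ne le_sup_right ?_)
      intro h
      exact hnle (h ▸ le_sup_left)
    obtain ⟨g, hg⟩ := MulAction.exists_smul_eq G a b
    have hgmem : g ∈ ((N ⊔ MulAction.stabilizer G a : Subgroup G) : Set G) := by
      rw [hsup]; trivial
    rw [Subgroup.normal_mul] at hgmem
    obtain ⟨n, hn, s, hs, rfl⟩ := hgmem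
    refine ⟨n, hn, ?_⟩
    have hsa : s • a = a := hs
    calc n • a = n • s • a := by rw [hsa]
      _ = (n * s) • a := (mul_smul n s a).symm
      _ = b := hg
  -- The engine: a minimal normal subgroup on which the action is semiregular gives a
  -- contradiction.
  have hengine : ∀ (N : Subgroup G), N.Normal → N ≠ ⊥ →
      (∀ M : Subgroup G, M.Normal → M ≤ N → M = ⊥ ∨ M = N) →
      (∀ n ∈ N, (∃ a : X, n • a = a) → n = 1) → False := by
    intro N hN hNbot hmin hsemi
    have hcancel : ∀ z : G, t * (t * z) = z := by
      intro z; rw [← mul_assoc, ht2, one_mul]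
    have hcomm : ∀ n ∈ N, t * n = n * t := by
      intro n hn
      set x := n * (t * n⁻¹ * t⁻¹) with hxdef
      have hxN : x ∈ N := N.mul_mem hn (hN.conj_mem _ (N.inv_mem hn) t)
      have hreal : IsConj x x⁻¹ := by
        rw [isConj_iff]
        refine ⟨t, ?_⟩
        simp only [hxdef, mul_inv_rev, inv_inv, htinv]
        simp [mul_assoc, hcancel, ht2]
      obtain ⟨a, ha⟩ := hfix N hN hNbot hmin x hxN hreal
      have hx1 : x = 1 := hsemi x hxN ⟨a, ha⟩
      have h2 : t * n⁻¹ * t⁻¹ = n⁻¹ := (mul_eq_one_iff_inv_eq.mp hx1).symm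
      have h3 : t * n⁻¹ = n⁻¹ * t := mul_inv_eq_iff_eq_mul.mp h2
      have h4 := congrArg (fun z : G => z⁻¹) h3
      simp only [mul_inv_rev, inv_inv, htinv] at h4
      exact h4.symm
    apply ht1
    apply hfaithful
    intro x
    obtain ⟨n, hn, hnx⟩ := htrans N hN hNbot a₀ x
    calc t • x = t • n • a₀ := by rw [hnx]
      _ = (t * n) • a₀ := (mul_smul t n a₀).symm
      _ = (n * t) • a₀ := by rw [hcomm n hn]
      _ = n • t • a₀ := mul_smul n t a₀
      _ = n • a₀ := by rw [hta₀]
      _ = x := hnx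
  -- Existence of a minimal normal subgroup, by strong induction on the cardinality.
  have hexmin : ∀ n : ℕ, ∀ N : Subgroup G, Nat.card N ≤ n → N.Normal → N ≠ ⊥ →
      ∃ M : Subgroup G, M.Normal ∧ M ≠ ⊥ ∧ M ≤ N ∧
        (∀ K : Subgroup G, K.Normal → K ≤ M → K = ⊥ ∨ K = M) := by
    intro n
    induction n with
    | zero =>
      intro N hcard _ _
      exact absurd hcard (by have := Nat.card_pos (α := N); omega)
    | succ n ih =>
      intro N hcard hN hNbot
      by_cases hm : ∀ K : Subgroup G, K.Normal → K ≤ N → K = ⊥ ∨ K = N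
      · exact ⟨N, hN, hNbot, le_rfl, hm⟩
      · push_neg at hm
        obtain ⟨K, hK, hKle, hKbot, hKne⟩ := hm
        have hlt : Nat.card K < Nat.card N := by
          by_contra hge
          push_neg at hge
          exact hKne (Subgroup.eq_of_le_of_card_ge hKle hge)
        obtain ⟨M, h1, h2, h3, h4⟩ := ih K (by omega) hK hKbot
        exact ⟨M, h1, h2, h3.trans hKle, h4⟩
  have hGnt : Nontrivial G := by
    rw [← Fintype.one_lt_card_iff_nontrivial]
    obtain ⟨k, hk⟩ := heven
    have := Fintype.card_pos (α := G)
    omega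
  obtain ⟨N, hN, hNbot, -, hmin⟩ :=
    hexmin (Nat.card (⊤ : Subgroup G)) ⊤ le_rfl inferInstance
      (by simp)
  refine ⟨N, ⟨hN, hNbot, hmin, ?_⟩, ?_⟩
  · -- N is nonabelian
    by_contra hab
    push_neg at hab
    refine hengine N hN hNbot hmin ?_
    rintro n hn ⟨a, ha⟩
    apply hfaithful
    intro x
    obtain ⟨m, hm, hma⟩ := htrans N hN hNbot a x
    calc n • x = n • m • a := by rw [hma]
      _ = (n * m) • a := (mul_smul n m a).symm
      _ = (m * n) • a := by rw [hab n hn m hm]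
      _ = m • n • a := mul_smul m n a
      _ = m • a := by rw [ha]
      _ = x := hma
  · -- uniqueness
    rintro N' ⟨hN', hN'bot, hN'min⟩
    by_contra hne
    have hinf : N ⊓ N' = ⊥ := by
      rcases hmin (N ⊓ N') ((by haveI := hN; haveI := hN'; exact Subgroup.normal_inf_normal N N')) inf_le_left with h | h
      · exact h
      · have hle : N ≤ N' := h ▸ inf_le_right
        rcases hN'min N hN hle with h2 | h2
        · exact absurd h2 hNbot
        · exact absurd h2.symm hne
    have hdis : Disjoint N N' := disjoint_iff.mpr hinf
    refine hengine N' hN' hN'bot hN'min ?_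
    rintro n' hn' ⟨a, ha⟩
    apply hfaithful
    intro x
    obtain ⟨m, hm, hma⟩ := htrans N hN hNbot a x
    have hcm : m * n' = n' * m :=
      Subgroup.commute_of_normal_of_disjoint N N' hN hN' hdis m n' hm hn'
    calc n' • x = n' • m • a := by rw [hma]
      _ = (n' * m) • a := (mul_smul n' m a).symm
      _ = (m * n') • a := by rw [hcm]
      _ = m • n' • a := mul_smul m n' a
      _ = m • a := by rw [ha]
      _ = x := hma
end

section
/- Let G be a finite group and let x be a non-trivial real element of G of odd order. Then the number of Sylow 2-subgroups of G that are normalized by x is even. -/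
/-!
If `c` inverts `x`, so does the `2`-part `g` of `c` (an odd power of `c`). Since `g` normalizes
`⟨x⟩`, the cyclic `2`-group `⟨g⟩` permutes the Sylow `2`-subgroups normalized by `x`, so their
number is congruent mod `2` to the number of those also normalized by `g`. There are none: such a
`Q` contains the `2`-element `g`, hence the commutator `⁅x, g⁆ = x ^ 2`, which has odd order, so
`x = 1`.
-/

open Subgroup MulAction

section

variable {G : Type*} [Group G]

theorem SemiconjBy.pow_left_of_odd {c x : G} (h : SemiconjBy c x x⁻¹) {m : ℕ} (hm : Odd m) :
    SemiconjBy (c ^ m) x x⁻¹ := by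
  obtain ⟨k, rfl⟩ := hm
  have hsq : Commute (c ^ 2) x := by
    rw [sq]
    have := h.inv_right.mul_left h
    rwa [inv_inv] at this
  rw [pow_succ, pow_mul]
  exact SemiconjBy.mul_left (hsq.pow_left k).inv_right h

theorem SemiconjBy.mem_normalizer_zpowers {g x : G} (h : SemiconjBy g x x⁻¹) :
    g ∈ normalizer (zpowers x : Set G) := by
  rw [mem_normalizer_iff_map_conj_eq, MonoidHom.map_zpowers]
  simp [mul_inv_eq_of_eq_mul h.eq, zpowers_inv]

theorem SemiconjBy.sq_mem_of_mem_normalizer {P : Subgroup G} {g x : G} (h : SemiconjBy g x x⁻¹)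
    (hg : g ∈ P) (hx : x ∈ normalizer (P : Set G)) : x ^ 2 ∈ P := by
  have hconj : x * g * x⁻¹ ∈ P := (mem_normalizer_iff.mp hx g).mp hg
  have hcomm : x * g * x⁻¹ * g⁻¹ = x ^ 2 := by
    rw [mul_assoc x, mul_assoc x, mul_inv_eq_of_eq_mul h.inv_right.eq, inv_inv, sq]
  rw [← hcomm]
  exact P.mul_mem hconj (P.inv_mem hg)

theorem exists_coprime_isPGroup_zpowers_pow {p : ℕ} (hp : p.Prime) {c : G}
    (hc : IsOfFinOrder c) : ∃ m, p.Coprime m ∧ IsPGroup p (zpowers (c ^ m)) := by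
  refine ⟨ordCompl[p] (orderOf c), Nat.coprime_ordCompl hp hc.orderOf_pos.ne',
    IsPGroup.of_card_dvd_pow (n := (orderOf c).factorization p) ?_⟩
  rw [Nat.card_zpowers]
  apply orderOf_dvd_of_pow_eq_one
  rw [← pow_mul, mul_comm, Nat.ordProj_mul_ordCompl_eq_self, pow_orderOf_eq_one]

theorem IsPGroup.eq_one_of_pow_mem {p : ℕ} {P : Subgroup G} (hP : IsPGroup p P) {x : G}
    (hcop : (orderOf x).Coprime p) (hx : x ^ p ∈ P) : x = 1 := by
  have := hP.orderOf_coprime hcop.symm ⟨x ^ p, hx⟩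
  rw [orderOf_mk, hcop.orderOf_pow, Nat.coprime_self] at this
  exact orderOf_eq_one_iff.mp this

theorem smul_mem_fixedPoints_of_mem_normalizer {α : Type*} [MulAction G α] {H : Subgroup G}
    {g : G} (hg : g ∈ normalizer (H : Set G)) {a : α} (ha : a ∈ fixedPoints H α) :
    g • a ∈ fixedPoints H α := by
  intro h
  rw [Subgroup.smul_def, ← inv_smul_eq_iff, smul_smul, smul_smul]
  exact ha ⟨_, (mem_normalizer_iff''.mp hg _).mp h.2⟩

theorem IsPGroup.ncard_modEq_ncard_inter_fixedPoints {α : Type*} [MulAction G α] [Finite α]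
    {p : ℕ} [Fact p.Prime] (hG : IsPGroup p G) {s : Set α} (hs : ∀ g : G, ∀ a ∈ s, g • a ∈ s) :
    s.ncard ≡ (s ∩ fixedPoints G α).ncard [MOD p] := by
  let S : SubMulAction G α := ⟨s, fun g _ ha => hs g _ ha⟩
  have hfix : Subtype.val '' fixedPoints G S = s ∩ fixedPoints G α := by
    ext a
    refine ⟨?_, fun ⟨ha, hfix⟩ => ⟨⟨a, ha⟩, fun g => Subtype.ext (hfix g), rfl⟩⟩
    rintro ⟨b, hb, rfl⟩
    exact ⟨b.2, fun g => congrArg Subtype.val (hb g)⟩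
  rw [← hfix, Set.ncard_image_of_injective _ Subtype.val_injective, ← Nat.card_coe_set_eq,
    ← Nat.card_coe_set_eq]
  exact hG.card_modEq_card_fixedPoints S

end

/-- A non-trivial real element of odd order of a finite group `G` normalizes an even
number of Sylow 2-subgroups of `G`. -/
theorem even_card_sylow_two_normalized_by_real_odd_element
    (G : Type*) [Group G] [Fintype G] (x : G) (hx : x ≠ 1)
    (hreal : IsConj x x⁻¹) (hodd : Odd (orderOf x)) :
    Even ({Q : Sylow 2 G | x ∈ Subgroup.normalizer ((Q : Subgroup G) : Set G)}.ncard) := by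
  obtain ⟨c, hc⟩ := hreal
  obtain ⟨m, hm, h2group⟩ :=
    exists_coprime_isPGroup_zpowers_pow Nat.prime_two (isOfFinOrder_of_finite (c : G))
  set g := (c : G) ^ m
  have hg : SemiconjBy g x x⁻¹ := hc.pow_left_of_odd (Nat.coprime_two_left.mp hm)
  set S := {Q : Sylow 2 G | x ∈ Subgroup.normalizer ((Q : Subgroup G) : Set G)}
  have hS : S = fixedPoints (zpowers x) (Sylow 2 G) := by
    ext Q
    rw [Subgroup.sylow_mem_fixedPoints_iff, zpowers_le]
    rfl
  have hstable : ∀ h : zpowers g, ∀ Q ∈ S, h • Q ∈ S := by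
    rintro ⟨h, hh⟩ Q hQ
    rw [hS] at hQ ⊢
    exact smul_mem_fixedPoints_of_mem_normalizer (zpowers_le.mpr hg.mem_normalizer_zpowers hh) hQ
  have hfree : S ∩ fixedPoints (zpowers g) (Sylow 2 G) = ∅ := by
    refine Set.eq_empty_of_forall_notMem fun Q ⟨hxQ, hgQ⟩ => hx ?_
    have hgQ : g ∈ Q := h2group.sylow_mem_fixedPoints_iff.mp hgQ (mem_zpowers g)
    exact Q.isPGroup'.eq_one_of_pow_mem (Nat.coprime_two_right.mpr hodd)
      (hg.sq_mem_of_mem_normalizer hgQ hxQ)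
  have hmod := h2group.ncard_modEq_ncard_inter_fixedPoints hstable
  rw [hfree, Set.ncard_empty] at hmod
  exact even_iff_two_dvd.mpr (Nat.modEq_zero_iff_dvd.mp hmod)
end
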